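/- If (A, ·) is a pre-Malcev superalgebra, then A equipped with the supercommutator [x, y] = x·y − (−1)^{|x||y|} y·x is a Malcev superalgebra (the sub-adjacent Malcev superalgebra). -/
import Mathlib


open scoped TensorProduct

/-- The super sign `(-1)^{ij}` for parities `i j : ZMod 2`. -/
def sgn (K : Type*) [Field K] (i j : ZMod 2) : K := (-1 : K) ^ (i * j).val

/-- `(A, br)` with grading `G` is a Malcev superalgebra: the bracket is even,
super skew-symmetric, and satisfies the super Malcev identity on homogeneous
elements. -/
def IsMalcev {K A : Type*} [Field K] [AddCommGroup A] [Module K A]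
    (G : ZMod 2 → Submodule K A) (br : A →ₗ[K] A →ₗ[K] A) : Prop :=
  (∀ i j, ∀ x ∈ G i, ∀ y ∈ G j, br x y ∈ G (i + j)) ∧
  (∀ i j, ∀ x ∈ G i, ∀ y ∈ G j, br x y = - sgn K i j • br y x) ∧
  (∀ i j k l, ∀ x ∈ G i, ∀ y ∈ G j, ∀ z ∈ G k, ∀ t ∈ G l,
    sgn K j k • br (br x z) (br y t) =
      br (br (br x y) z) t + sgn K i (j + k + l) • br (br (br y z) t) x
        + sgn K (i + j) (k + l) • br (br (br z t) x) y
        + sgn K l (i + j + k) • br (br (br t x) y) z)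

/-- The pre-Malcev superidentity for a product `pm`, where `br` is (on
homogeneous elements) the supercommutator of `pm`. -/
def PreMalcevId {K A : Type*} [Field K] [AddCommGroup A] [Module K A]
    (G : ZMod 2 → Submodule K A) (pm br : A →ₗ[K] A →ₗ[K] A) : Prop :=
  ∀ i j k l, ∀ x ∈ G i, ∀ y ∈ G j, ∀ z ∈ G k, ∀ t ∈ G l,
    sgn K i (j + k) • pm (br y z) (pm x t) + pm (br (br x y) z) t
      + sgn K i j • pm y (pm (br x z) t) - pm x (pm y (pm z t))
      + sgn K k (i + j) • pm z (pm x (pm y t)) = 0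

/-- `br` is the supercommutator of the product `mul` on homogeneous elements:
`[x,y] = x·y - (-1)^{|x||y|} y·x`. -/
def SuperComm {K A : Type*} [Field K] [AddCommGroup A] [Module K A]
    (G : ZMod 2 → Submodule K A) (mul br : A →ₗ[K] A →ₗ[K] A) : Prop :=
  ∀ i j, ∀ x ∈ G i, ∀ y ∈ G j, br x y = mul x y - sgn K i j • mul y x


lemma sgn00 (K : Type*) [Field K] : sgn K 0 0 = 1 := by norm_num [sgn]
lemma sgn01 (K : Type*) [Field K] : sgn K 0 1 = 1 := by norm_num [sgn]
lemma sgn10 (K : Type*) [Field K] : sgn K 1 0 = 1 := by norm_num [sgn]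
lemma sgn11 (K : Type*) [Field K] : sgn K 1 1 = -1 := by norm_num [sgn, ZMod.val_one]

lemma z2cases : ∀ m : ZMod 2, m = 0 ∨ m = 1 := by decide
lemma z00 : (0 + 0 : ZMod 2) = 0 := by decide
lemma z01 : (0 + 1 : ZMod 2) = 1 := by decide
lemma z10 : (1 + 0 : ZMod 2) = 1 := by decide
lemma z11 : (1 + 1 : ZMod 2) = 0 := by decide

set_option maxHeartbeats 4000000 in
/-- a pre-Malcev superalgebra with the supercommutator bracket is
a Malcev superalgebra (the sub-adjacent Malcev superalgebra). -/
theorem stmt6 {K A : Type*} [Field K] [AddCommGroup A] [Module K A]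
    (G : ZMod 2 → Submodule K A) (pm br : A →ₗ[K] A →ₗ[K] A)
    (hgrade : ∀ i j, ∀ x ∈ G i, ∀ y ∈ G j, pm x y ∈ G (i + j))
    (hbr : SuperComm G pm br) (hPM : PreMalcevId G pm br) :
    IsMalcev G br := by
  have hbm : ∀ i j, ∀ x ∈ G i, ∀ y ∈ G j, br x y ∈ G (i + j) := by
    intro i j x hx y hy
    rw [hbr i j x hx y hy]
    exact Submodule.sub_mem _ (hgrade i j x hx y hy)
      (Submodule.smul_mem _ _ (by rw [add_comm]; exact hgrade j i y hy x hx))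
  refine ⟨hbm, ?_, ?_⟩
  · intro i j x hx y hy
    rw [hbr i j x hx y hy, hbr j i y hy x hx]
    rcases z2cases i with rfl | rfl <;> rcases z2cases j with rfl | rfl <;>
      simp only [sgn00, sgn01, sgn10, sgn11] <;> module
  · intro i j k l x hx y hy z hz t ht
    have Pexp : ∀ a b c d : ZMod 2, ∀ u ∈ G a, ∀ v ∈ G b, ∀ w ∈ G c, ∀ s ∈ G d,
        sgn K a (b + c) • pm (pm v w) (pm u s)
          - (sgn K a (b + c) * sgn K b c) • pm (pm w v) (pm u s)
          + pm (pm (pm u v) w) s - sgn K (a + b) c • pm (pm w (pm u v)) s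
          - sgn K a b • pm (pm (pm v u) w) s
          + (sgn K a b * sgn K (a + b) c) • pm (pm w (pm v u)) s
          + sgn K a b • pm v (pm (pm u w) s)
          - (sgn K a b * sgn K a c) • pm v (pm (pm w u) s)
          - pm u (pm v (pm w s)) + sgn K c (a + b) • pm w (pm u (pm v s)) = 0 := by
      intro a b c d u hu v hv w hw s hs
      have e := hPM a b c d u hu v hv w hw s hs
      rw [hbr b c v hv w hw, hbr a b u hu v hv, hbr a c u hu w hw] at e
      simp only [map_sub, map_smul, LinearMap.sub_apply, LinearMap.smul_apply] at e
      rw [hbr (a + b) c _ (hgrade a b u hu v hv) w hw,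
        hbr (a + b) c _ (by rw [add_comm]; exact hgrade b a v hv u hu) w hw] at e
      simp only [map_sub, map_smul, LinearMap.sub_apply, LinearMap.smul_apply] at e
      linear_combination (norm := module) e
    have e1 := Pexp i k l j x hx z hz t ht y hy
    have e2 := Pexp i l j k x hx t ht y hy z hz
    have e3 := Pexp i l k j x hx t ht z hz y hy
    have e4 := Pexp j i k l y hy x hx z hz t ht
    have e5 := Pexp k i l j z hz x hx t ht y hy
    have e6 := Pexp k j l i z hz y hy t ht x hx
    have e7 := Pexp k l i j z hz t ht x hx y hy
    have e8 := Pexp l i k j t ht x hx z hz y hy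
    rw [hbr (i + k) (j + l) _ (hbm i k x hx z hz) _ (hbm j l y hy t ht),
      hbr (i + j + k) l _ (hbm (i + j) k _ (hbm i j x hx y hy) z hz) t ht,
      hbr (j + k + l) i _ (hbm (j + k) l _ (hbm j k y hy z hz) t ht) x hx,
      hbr (k + l + i) j _ (hbm (k + l) i _ (hbm k l z hz t ht) x hx) y hy,
      hbr (l + i + j) k _ (hbm (l + i) j _ (hbm l i t ht x hx) y hy) z hz,
      hbr (i + j) k _ (hbm i j x hx y hy) z hz,
      hbr (j + k) l _ (hbm j k y hy z hz) t ht,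
      hbr (k + l) i _ (hbm k l z hz t ht) x hx,
      hbr (l + i) j _ (hbm l i t ht x hx) y hy,
      hbr i k x hx z hz, hbr j l y hy t ht, hbr i j x hx y hy,
      hbr j k y hy z hz, hbr k l z hz t ht, hbr l i t ht x hx]
    simp only [map_sub, map_smul, LinearMap.sub_apply, LinearMap.smul_apply] at e1 e2 e3 e4 e5 e6 e7 e8 ⊢
    rcases z2cases i with rfl | rfl <;> rcases z2cases j with rfl | rfl <;>
      rcases z2cases k with rfl | rfl <;> rcases z2cases l with rfl | rfl <;>
      simp only [z00, z01, z10, z11, sgn00, sgn01, sgn10, sgn11, one_smul, neg_smul,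
        neg_neg, one_mul, mul_one, neg_mul, mul_neg] at e1 e2 e3 e4 e5 e6 e7 e8 ⊢
    · linear_combination (norm := module) -e1 + e2 - e3 + e4 - e5 + e6 - e7 - e8
    · linear_combination (norm := module) -e1 + e2 - e3 + e4 - e5 + e6 - e7 - e8
    · linear_combination (norm := module) -e1 + e2 - e3 + e4 - e5 + e6 - e7 - e8
    · linear_combination (norm := module) -e1 - e2 + e3 + e4 - e5 + e6 - e7 + e8
    · linear_combination (norm := module) -e1 + e2 - e3 + e4 - e5 + e6 - e7 - e8
    · linear_combination (norm := module) e1 - e2 + e3 + e4 + e5 + e6 + e7 + e8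
    · linear_combination (norm := module) e1 + e2 + e3 + e4 + e5 - e6 + e7 + e8
    · linear_combination (norm := module) -e1 + e2 + e3 + e4 - e5 - e6 - e7 + e8
    · linear_combination (norm := module) -e1 + e2 - e3 + e4 - e5 + e6 - e7 - e8
    · linear_combination (norm := module) -e1 + e2 - e3 + e4 - e5 - e6 + e7 + e8
    · linear_combination (norm := module) -e1 + e2 - e3 + e4 + e5 - e6 + e7 - e8
    · linear_combination (norm := module) -e1 - e2 + e3 + e4 + e5 + e6 - e7 - e8
    · linear_combination (norm := module) -e1 + e2 - e3 - e4 - e5 - e6 - e7 - e8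
    · linear_combination (norm := module) e1 - e2 + e3 - e4 + e5 + e6 - e7 - e8
    · linear_combination (norm := module) e1 + e2 + e3 - e4 - e5 - e6 - e7 + e8
    · linear_combination (norm := module) -e1 + e2 + e3 - e4 + e5 + e6 - e7 - e8
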